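/- arXiv:1211.5392 — 2 statements merged into one kernel-verified Lean document; each statement's English description precedes it below -/
import Mathlib

section
/- Let ρ : 𝕋 → ℝ be continuous, nonnegative, with ∫_𝕋 ρ(y) dy = 2π, and let x₀ be a maximum point of ρ with ρ(x₀) ≥ 4. Set δ = 2π/ρ(x₀) (so 0 < δ ≤ π/2). Then (1/2π) P.V. ∫_𝕋 (ρ(x₀) − ρ(y)) / sin²((x₀−y)/2) dy ≥ ρ(x₀)²/(4π²). -/
/-!
Write `M = ρ(x₀)` and `δ = 2π/M`, so that the window `Ω = (x₀ - 2δ, x₀ + 2δ]` fits in one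
period. By Markov's inequality and `∫_𝕋 ρ = 2π`, the set of `y ∈ Ω` with `ρ(y) ≥ M/2` has
measure at most `4π/M = 2δ`, so `ρ < M/2` on a subset of `Ω` of measure at least `2δ`.
There the numerator is at least `M/2` and `sin²((x₀ - y)/2) ≤ δ²`, so the integral is at
least `(M/2)/δ² · 2δ = M²/(2π)`.
-/

open Real Set MeasureTheory

open scoped ENNReal

namespace Function.Periodic

theorem setLIntegral_Ioc_add_eq {f : ℝ → ℝ≥0∞} {T : ℝ} (hf : Periodic f T) (hT : 0 < T)
    (a b : ℝ) : ∫⁻ y in Ioc a (a + T), f y = ∫⁻ y in Ioc b (b + T), f y := by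
  have : Fact (0 < T) := ⟨hT⟩
  have h_lift (c : ℝ) : ∫⁻ y in Ioc c (c + T), f y = ∫⁻ x : AddCircle T, hf.lift x := by
    rw [← AddCircle.lintegral_preimage T c]
    exact setLIntegral_congr_fun measurableSet_Ioc fun y _ => (hf.lift_coe y).symm
  rw [h_lift a, h_lift b]

theorem mul_volume_superlevel_inter_le {g : ℝ → ℝ≥0∞} {T : ℝ} (hg : Measurable g)
    (hper : Periodic g T) (hT : 0 < T) {Ω : Set ℝ} {a : ℝ} (hΩ : Ω ⊆ Ioc a (a + T))
    (c : ℝ≥0∞) (b : ℝ) :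
    c * volume ({y | c ≤ g y} ∩ Ω) ≤ ∫⁻ y in Ioc b (b + T), g y := by
  calc c * volume ({y | c ≤ g y} ∩ Ω)
      = c * volume.restrict Ω {y | c ≤ g y} := by
        rw [Measure.restrict_apply (measurableSet_le measurable_const hg)]
    _ ≤ ∫⁻ y in Ω, g y := mul_meas_ge_le_lintegral₀ hg.aemeasurable c
    _ ≤ ∫⁻ y in Ioc a (a + T), g y := lintegral_mono_set hΩ
    _ = ∫⁻ y in Ioc b (b + T), g y := hper.setLIntegral_Ioc_add_eq hT a b

theorem volume_superlevel_inter_le {ρ : ℝ → ℝ} {T a b m c : ℝ} {Ω : Set ℝ}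
    (hρ : Measurable ρ) (hint : IntegrableOn ρ (Ioc b (b + T))) (hnonneg : ∀ x, 0 ≤ ρ x)
    (hper : Periodic ρ T) (hT : 0 < T) (hmass : ∫ y in b..b + T, ρ y = m) (hc : 0 < c)
    (hΩ : Ω ⊆ Ioc a (a + T)) :
    volume ({y | c ≤ ρ y} ∩ Ω) ≤ ENNReal.ofReal (m / c) := by
  have hsuper : {y | c ≤ ρ y} = {y | ENNReal.ofReal c ≤ ENNReal.ofReal (ρ y)} := by
    ext y; simp [ENNReal.ofReal_le_ofReal_iff (hnonneg y)]
  have hmarkov := (hper.comp ENNReal.ofReal).mul_volume_superlevel_inter_le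
    hρ.ennreal_ofReal hT hΩ (ENNReal.ofReal c) b
  rw [← ofReal_integral_eq_lintegral_ofReal hint (ae_of_all _ hnonneg),
    ← intervalIntegral.integral_of_le (by linarith), hmass, ← hsuper, mul_comm,
    ← ENNReal.le_div_iff_mul_le (by simp [hc]) (by simp)] at hmarkov
  rwa [ENNReal.ofReal_div_of_pos hc]

theorem sub_div_sin_sq {ρ : ℝ → ℝ} (hper : Periodic ρ (2 * π)) (c x : ℝ) :
    Periodic (fun y => (c - ρ y) / sin ((x - y) / 2) ^ 2) (2 * π) := by
  intro y
  have hhalf : (x - (y + 2 * π)) / 2 = (x - y) / 2 - π := by ring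
  simp only [hhalf, sin_sub_pi, neg_sq, hper y]

end Function.Periodic

theorem mul_measure_sub_le_setLIntegral {α : Type*} [MeasurableSpace α] {μ : Measure α}
    {f : α → ℝ≥0∞} {s u : Set α} {c v : ℝ≥0∞} (hs : MeasurableSet s) (hu : MeasurableSet u)
    (hμu : μ (u ∩ s) ≤ v) (hf : ∀ x ∈ s, x ∉ u → c ≤ f x) :
    c * (μ s - v) ≤ ∫⁻ x in s, f x ∂μ := by
  have hsu : s \ (u ∩ s) = s \ u := by ext x; simp +contextual
  calc c * (μ s - v)
      ≤ c * μ (s \ u) := by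
        gcongr
        rw [← hsu]
        exact (tsub_le_tsub_left hμu _).trans le_measure_sdiff
    _ = ∫⁻ _ in s \ u, c ∂μ := (setLIntegral_const _ _).symm
    _ ≤ ∫⁻ x in s \ u, f x ∂μ := setLIntegral_mono' (hs.diff hu) fun x hx => hf x hx.1 hx.2
    _ ≤ ∫⁻ x in s, f x ∂μ := lintegral_mono_set sdiff_subset

theorem div_sq_le_div_sin_sq {a b t δ : ℝ} (ha : 0 ≤ a) (hab : a ≤ b) (ht0 : t ≠ 0)
    (ht : |t| ≤ δ) (hδ : δ < π) : a / δ ^ 2 ≤ b / sin t ^ 2 := by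
  obtain ⟨hδt, htδ⟩ := abs_le.mp ht
  have hsin : sin t ≠ 0 := fun h =>
    ht0 ((sin_eq_zero_iff_of_lt_of_lt (by linarith) (by linarith)).mp h)
  have hsin_sq : sin t ^ 2 ≤ δ ^ 2 := sin_sq_le_sq.trans (sq_le_sq' hδt htδ)
  exact div_le_div₀ (ha.trans hab) hab (by positivity) hsin_sq

theorem stmt4_general (ρ : ℝ → ℝ) (x₀ : ℝ)
    (hcont : Continuous ρ) (hnonneg : ∀ x, 0 ≤ ρ x)
    (hper : ∀ x, ρ (x + 2*π) = ρ x)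
    (hmass : (∫ y in (-π)..π, ρ y) = 2*π)
    (hbig : 4 ≤ ρ x₀) :
    ENNReal.ofReal ((ρ x₀)^2 / (4*π^2)) ≤
      ENNReal.ofReal (1/(2*π)) *
        ∫⁻ y in Set.Ioc (-π) π,
          ENNReal.ofReal ((ρ x₀ - ρ y) / (Real.sin ((x₀ - y)/2))^2) := by
  set M := ρ x₀
  set δ := 2 * π / M with hδ
  have hM : 0 < M := by linarith
  have h4δ : 4 * δ ≤ 2 * π := by
    rw [hδ, ← mul_div_assoc, div_le_iff₀ hM]; nlinarith [pi_pos]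
  set f : ℝ → ℝ≥0∞ := fun y => ENNReal.ofReal ((M - ρ y) / sin ((x₀ - y) / 2) ^ 2)
  set Ω := Ioc (x₀ - 2 * δ) (x₀ + 2 * δ)
  have hΩ : Ω ⊆ Ioc (x₀ - π) (x₀ - π + 2 * π) := Ioc_subset_Ioc (by linarith) (by linarith)
  have hsuper : volume ({y | M / 2 ≤ ρ y} ∩ Ω) ≤ ENNReal.ofReal (2 * δ) := by
    have hmass' : ∫ y in -π..-π + 2 * π, ρ y = 2 * π := by rwa [show -π + 2 * π = π by ring]
    convert Function.Periodic.volume_superlevel_inter_le hcont.measurable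
      hcont.integrableOn_Ioc hnonneg hper (by positivity) hmass' (half_pos hM) hΩ using 2
    rw [hδ]; field_simp
  have hΩ_sub : volume Ω - ENNReal.ofReal (2 * δ) = ENNReal.ofReal (2 * δ) := by
    rw [Real.volume_Ioc, ← ENNReal.ofReal_sub _ (by positivity)]; ring_nf
  have hf_off : ∀ y ∈ Ω, y ∉ {y | M / 2 ≤ ρ y} → ENNReal.ofReal (M / 2 / δ ^ 2) ≤ f y := by
    rintro y ⟨hy₁, hy₂⟩ hρy
    replace hρy : ρ y < M / 2 := lt_of_not_ge hρy
    have hy : x₀ - y ≠ 0 := sub_ne_zero.mpr (by rintro rfl; linarith)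
    exact ENNReal.ofReal_le_ofReal <| div_sq_le_div_sin_sq (by positivity) (by linarith)
      (div_ne_zero hy two_ne_zero) (abs_le.mpr ⟨by linarith, by linarith⟩) (by linarith)
  have hf : Function.Periodic f (2 * π) :=
    (Function.Periodic.sub_div_sin_sq hper M x₀).comp ENNReal.ofReal
  calc ENNReal.ofReal (M ^ 2 / (4 * π ^ 2))
      = ENNReal.ofReal (1 / (2 * π)) *
          (ENNReal.ofReal (M / 2 / δ ^ 2) * ENNReal.ofReal (2 * δ)) := by
        rw [← ENNReal.ofReal_mul (by positivity), ← ENNReal.ofReal_mul (by positivity), hδ]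
        congr 1
        field_simp; ring
    _ ≤ ENNReal.ofReal (1 / (2 * π)) * ∫⁻ y in Ω, f y := by
        rw [← hΩ_sub]
        gcongr
        exact mul_measure_sub_le_setLIntegral measurableSet_Ioc
          (measurableSet_le measurable_const hcont.measurable) hsuper hf_off
    _ ≤ ENNReal.ofReal (1 / (2 * π)) * ∫⁻ y in Ioc (-π) π, f y := by
        rw [show Ioc (-π) π = Ioc (-π) (-π + 2 * π) by ring_nf,
          ← hf.setLIntegral_Ioc_add_eq (by positivity) (x₀ - π)]
        gcongr

/-- Nonlinear lower bound for the half-Laplacian at a large maximum: if `ρ ≥ 0` is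
continuous, `2π`-periodic with `∫_𝕋 ρ = 2π`, and `ρ(x₀) = max ρ ≥ 4`, then
`(1/2π) ∫_𝕋 (ρ(x₀)-ρ(y))/sin²((x₀-y)/2) dy ≥ ρ(x₀)²/(4π²)`. -/
theorem stmt4 (ρ : ℝ → ℝ) (x₀ : ℝ)
    (hcont : Continuous ρ) (hnonneg : ∀ x, 0 ≤ ρ x)
    (hper : ∀ x, ρ (x + 2*π) = ρ x)
    (hmass : (∫ y in (-π)..π, ρ y) = 2*π)
    (hmax : ∀ x, ρ x ≤ ρ x₀) (hbig : 4 ≤ ρ x₀) :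
    ENNReal.ofReal ((ρ x₀)^2 / (4*π^2)) ≤
      ENNReal.ofReal (1/(2*π)) *
        ∫⁻ y in Set.Ioc (-π) π,
          ENNReal.ofReal ((ρ x₀ - ρ y) / (Real.sin ((x₀ - y)/2))^2) :=
  stmt4_general ρ x₀ hcont hnonneg hper hmass hbig
end

section
/- Let ρ : 𝕋^d → ℝ be continuous with mean 1 over the torus of side 2π, ρ ≥ 0, and let x₀ be a maximum point of ρ. Then for 0 < α < 2 there exists an explicit constant c_{α,d} > 0 such that C_{α,d} P.V. ∫_{𝕋^d} (ρ(x₀) − ρ(y))/|x₀ − y|^{d+α} dy ≥ c_{α,d} (ρ(x₀) − 1), where C_{α,d} is the normalization constant of the fractional Laplacian. -/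
/-!
At a maximum point every difference `ρ x₀ - ρ (x₀ + z)` is nonnegative, and on the cell
`[-π, π]^d` we have `‖z‖ ≤ π √d`, so the kernel `‖z‖^{-(d+α)}` is at least `(π √d)^{-(d+α)}`.
The remaining integral `∫ (ρ x₀ - ρ (x₀ + z)) dz` equals `(2π)^d (ρ x₀ - 1)`, because the integral
of a `2πℤ^d`-periodic function over a fundamental cell is invariant under translation.
-/

open Real Set MeasureTheory

/-- Coordinate vector in `EuclideanSpace ℝ (Fin d)`. -/
noncomputable def euclVec (d : ℕ) (a : Fin d → ℝ) : EuclideanSpace ℝ (Fin d) :=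
  (EuclideanSpace.equiv (Fin d) ℝ).symm a

/-- The symmetric cell `[-π, π]^d` of the torus `𝕋^d`. -/
def symCell (d : ℕ) : Set (EuclideanSpace ℝ (Fin d)) :=
  (EuclideanSpace.equiv (Fin d) ℝ) ⁻¹' (Set.univ.pi fun _ => Set.Icc (-π) π)

open Pointwise Submodule

theorem setIntegral_comp_add_left_of_isAddFundamentalDomain {E : Type*} [AddCommGroup E]
    [MeasurableSpace E] [MeasurableAdd E] {μ : Measure E} [μ.IsAddLeftInvariant]
    {L : AddSubgroup E} [Countable L] {F s : Set E} (hF : IsAddFundamentalDomain L F μ)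
    (hs : s =ᵐ[μ] F) {f : E → ℝ} (hf : ∀ l ∈ L, ∀ x, f (l + x) = f x) (x₀ : E) :
    ∫ z in s, f (x₀ + z) ∂μ = ∫ z in s, f z ∂μ := by
  rw [setIntegral_congr_set hs, setIntegral_congr_set hs]
  calc ∫ z in F, f (x₀ + z) ∂μ = ∫ z in x₀ +ᵥ F, f z ∂μ :=
        ((measurePreserving_add_left μ x₀).setIntegral_image_emb
          (measurableEmbedding_addLeft x₀) f F).symm
    _ = ∫ z in F, f z ∂μ := (hF.vadd_of_comm x₀).setIntegral_eq hF fun l x => hf l l.2 x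

theorem EuclideanSpace.norm_le_mul_sqrt_card {ι : Type*} [Fintype ι] {x : EuclideanSpace ℝ ι}
    {r : ℝ} (hr : 0 ≤ r) (hx : ∀ i, |x i| ≤ r) : ‖x‖ ≤ r * √(Fintype.card ι) := by
  rw [EuclideanSpace.norm_eq, ← sqrt_sq hr, ← sqrt_mul' _ (Nat.cast_nonneg _)]
  gcongr
  calc ∑ i, ‖x i‖ ^ 2 ≤ ∑ _i : ι, r ^ 2 := by
        gcongr with i
        exact (norm_eq_abs _).trans_le (hx i)
    _ = _ := by simp [mul_comm]

noncomputable def twoPiBasis (d : ℕ) : Module.Basis (Fin d) ℝ (EuclideanSpace ℝ (Fin d)) :=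
  (EuclideanSpace.basisFun (Fin d) ℝ).toBasis.unitsSMul fun _ => Units.mk0 (2 * π) two_pi_pos.ne'

theorem twoPiBasis_repr_apply (d : ℕ) (v : EuclideanSpace ℝ (Fin d)) (i : Fin d) :
    (twoPiBasis d).repr v i = (2 * π)⁻¹ * v i := by
  simp [twoPiBasis, Module.Basis.repr_unitsSMul, Units.smul_def]

theorem exists_eq_euclVec_of_mem_span_twoPiBasis {d : ℕ} {l : EuclideanSpace ℝ (Fin d)}
    (hl : l ∈ span ℤ (range (twoPiBasis d))) :
    ∃ ν : Fin d → ℤ, l = euclVec d fun i => 2 * π * ν i := by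
  obtain ⟨ν, rfl⟩ := (mem_span_range_iff_exists_fun ℤ).mp hl
  refine ⟨ν, ?_⟩
  ext j
  simp [twoPiBasis, euclVec, Module.Basis.unitsSMul_apply, Units.smul_def, Pi.single_apply]

theorem vadd_fundamentalDomain_twoPiBasis (d : ℕ) :
    (euclVec d fun _ => -π) +ᵥ ZSpan.fundamentalDomain (twoPiBasis d) =
      EuclideanSpace.equiv (Fin d) ℝ ⁻¹' univ.pi fun _ => Ico (-π) π := by
  ext x
  simp only [mem_vadd_set_iff_neg_vadd_mem, ZSpan.mem_fundamentalDomain, twoPiBasis_repr_apply,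
    mem_preimage, mem_univ_pi, mem_Ico, vadd_eq_add, PiLp.coe_continuousLinearEquiv]
  refine forall_congr' fun i => ?_
  have hcoord : ((-euclVec d fun _ => -π) + x) i = x i + π := by
    simp [euclVec, add_comm]
  rw [hcoord, ← div_eq_inv_mul, le_div_iff₀ two_pi_pos, div_lt_one two_pi_pos]
  constructor <;> rintro ⟨h₁, h₂⟩ <;> constructor <;> linarith

theorem symCell_ae_eq_vadd_fundamentalDomain (d : ℕ) :
    symCell d =ᵐ[volume] (euclVec d fun _ => -π) +ᵥ ZSpan.fundamentalDomain (twoPiBasis d) := by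
  rw [vadd_fundamentalDomain_twoPiBasis]
  exact (PiLp.volume_preserving_ofLp (Fin d)).quasiMeasurePreserving.preimage_ae_eq
    Measure.pi_Ico_ae_eq_pi_Icc.symm

theorem integral_symCell_comp_add_left {d : ℕ} {ρ : EuclideanSpace ℝ (Fin d) → ℝ}
    (hper : ∀ (ν : Fin d → ℤ) x, ρ (x + euclVec d fun i => 2 * π * ν i) = ρ x)
    (x₀ : EuclideanSpace ℝ (Fin d)) :
    ∫ z in symCell d, ρ (x₀ + z) = ∫ z in symCell d, ρ z := by
  have : Countable (span ℤ (range (twoPiBasis d))).toAddSubgroup := by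
    change Countable (span ℤ (range (twoPiBasis d)))
    infer_instance
  refine setIntegral_comp_add_left_of_isAddFundamentalDomain
    ((ZSpan.isAddFundamentalDomain' (twoPiBasis d) volume).vadd_of_comm _)
    (symCell_ae_eq_vadd_fundamentalDomain d) (fun l hl x => ?_) x₀
  obtain ⟨ν, rfl⟩ := exists_eq_euclVec_of_mem_span_twoPiBasis hl
  rw [add_comm, hper]

theorem isCompact_symCell (d : ℕ) : IsCompact (symCell d) :=
  (EuclideanSpace.equiv (Fin d) ℝ).toHomeomorph.isCompact_preimage.mpr
    (isCompact_univ_pi fun _ => isCompact_Icc)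

theorem Continuous.integrableOn_symCell {d : ℕ} {f : EuclideanSpace ℝ (Fin d) → ℝ}
    (hf : Continuous f) : IntegrableOn f (symCell d) :=
  hf.continuousOn.integrableOn_compact (isCompact_symCell d)

theorem measureReal_symCell (d : ℕ) : volume.real (symCell d) = (2 * π) ^ d := by
  rw [symCell, PiLp.coe_continuousLinearEquiv, measureReal_def,
    (PiLp.volume_preserving_ofLp (Fin d)).measure_preimage
      (MeasurableSet.univ_pi fun _ => measurableSet_Icc).nullMeasurableSet, volume_pi_pi]
  simp only [Real.volume_Icc, sub_neg_eq_add, ← two_mul, Finset.prod_const, Finset.card_univ,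
    Fintype.card_fin, ENNReal.toReal_pow, ENNReal.toReal_ofReal two_pi_pos.le]

theorem norm_le_of_mem_symCell {d : ℕ} {z : EuclideanSpace ℝ (Fin d)} (hz : z ∈ symCell d) :
    ‖z‖ ≤ π * √d := by
  simpa using EuclideanSpace.norm_le_mul_sqrt_card pi_pos.le fun i => abs_le.mpr (hz i (mem_univ i))

theorem rpow_neg_mul_le_div_rpow {a r R p : ℝ} (ha : 0 ≤ a) (hr : 0 < r) (hrR : r ≤ R)
    (hp : 0 ≤ p) : R ^ (-p) * a ≤ a / r ^ p := by
  rw [rpow_neg (hr.le.trans hrR), ← div_eq_inv_mul]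
  exact div_le_div_of_nonneg_left ha (rpow_pos_of_pos hr p) (rpow_le_rpow hr.le hrR hp)

theorem stmt14_general (d : ℕ) (α : ℝ) (hα : 0 < α)
    (C : ℝ) (hC : 0 < C)
    (ρ : EuclideanSpace ℝ (Fin d) → ℝ) (x₀ : EuclideanSpace ℝ (Fin d))
    (hcont : Continuous ρ)
    (hper : ∀ (ν : Fin d → ℤ) x, ρ (x + euclVec d fun i => 2*π*(ν i)) = ρ x)
    (hmean : (∫ x in symCell d, ρ x) = (2*π)^d)
    (hmax : ∀ x, ρ x ≤ ρ x₀) :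
    ENNReal.ofReal (C * (π * Real.sqrt d) ^ (-((d:ℝ) + α)) * (2*π)^d * (ρ x₀ - 1)) ≤
      ENNReal.ofReal C *
        ∫⁻ z in symCell d,
          ENNReal.ofReal ((ρ x₀ - ρ (x₀ + z)) / ‖z‖ ^ ((d:ℝ) + α)) := by
  set K := (π * √d) ^ (-((d:ℝ) + α))
  have hK : 0 ≤ K := rpow_nonneg (by positivity) _
  have hgap : ∀ z, 0 ≤ ρ x₀ - ρ (x₀ + z) := fun z => sub_nonneg.mpr (hmax _)
  have hshift : Continuous fun z => ρ (x₀ + z) := hcont.comp (continuous_const_add x₀)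
  have hintegral : ∫ z in symCell d, K * (ρ x₀ - ρ (x₀ + z)) = K * ((2*π)^d * (ρ x₀ - 1)) := by
    rw [integral_const_mul, integral_sub continuous_const.integrableOn_symCell
      hshift.integrableOn_symCell, integral_symCell_comp_add_left hper, hmean, setIntegral_const,
      measureReal_symCell, smul_eq_mul]
    ring
  have hpointwise : ∀ z ∈ symCell d,
      K * (ρ x₀ - ρ (x₀ + z)) ≤ (ρ x₀ - ρ (x₀ + z)) / ‖z‖ ^ ((d:ℝ) + α) := by
    intro z hz
    rcases eq_or_ne z 0 with rfl | hz0
    · simp -- both sides vanish, the right one as `0 / 0`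
    · exact rpow_neg_mul_le_div_rpow (hgap z) (norm_pos_iff.mpr hz0) (norm_le_of_mem_symCell hz)
        (by positivity)
  calc ENNReal.ofReal (C * K * (2*π)^d * (ρ x₀ - 1))
      = ENNReal.ofReal C * ENNReal.ofReal (∫ z in symCell d, K * (ρ x₀ - ρ (x₀ + z))) := by
        rw [hintegral, ← ENNReal.ofReal_mul hC.le]; ring_nf
    _ = ENNReal.ofReal C * ∫⁻ z in symCell d, ENNReal.ofReal (K * (ρ x₀ - ρ (x₀ + z))) := by
        rw [ofReal_integral_eq_lintegral_ofReal
          (by fun_prop : Continuous fun z => K * (ρ x₀ - ρ (x₀ + z))).integrableOn_symCell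
          (ae_of_all _ fun z => mul_nonneg hK (hgap z))]
    _ ≤ _ := by
        gcongr ENNReal.ofReal C * ?_
        exact setLIntegral_mono' (isCompact_symCell d).measurableSet fun z hz =>
          ENNReal.ofReal_le_ofReal (hpointwise z hz)

/-- Fractional-Laplacian lower bound at a maximum point on `𝕋^d`: for `ρ ≥ 0`
continuous, `2π`-periodic with mean `1`, maximum at `x₀`, and `0 < α < 2`,
`C_{α,d} ∫_{𝕋^d} (ρ(x₀)-ρ(y))/|x₀-y|^{d+α} dy ≥ c_{α,d} (ρ(x₀)-1)` with the
explicit constant `c_{α,d} = C_{α,d} (π√d)^{-(d+α)} (2π)^d`. -/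
theorem stmt14 (d : ℕ) (hd : 0 < d) (α : ℝ) (hα : 0 < α) (hα2 : α < 2)
    (C : ℝ) (hC : 0 < C)
    (ρ : EuclideanSpace ℝ (Fin d) → ℝ) (x₀ : EuclideanSpace ℝ (Fin d))
    (hcont : Continuous ρ) (hnonneg : ∀ x, 0 ≤ ρ x)
    (hper : ∀ (ν : Fin d → ℤ) x, ρ (x + euclVec d fun i => 2*π*(ν i)) = ρ x)
    (hmean : (∫ x in symCell d, ρ x) = (2*π)^d)
    (hmax : ∀ x, ρ x ≤ ρ x₀) :
    ENNReal.ofReal (C * (π * Real.sqrt d) ^ (-((d:ℝ) + α)) * (2*π)^d * (ρ x₀ - 1)) ≤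
      ENNReal.ofReal C *
        ∫⁻ z in symCell d,
          ENNReal.ofReal ((ρ x₀ - ρ (x₀ + z)) / ‖z‖ ^ ((d:ℝ) + α)) :=
  stmt14_general d α hα C hC ρ x₀ hcont hper hmean hmax
end
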